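/- Let x ∈ H = {x ∈ ℝ² : x₁ < 0}. Then Boggio's biharmonic Green function of the half-plane extends continuously and positively to the diagonal at x: G_H(x,y) → x₁²/(4π) > 0 as y → x with y ∈ H, y ≠ x. -/

import Mathlib

open MeasureTheory Real Filter Topology

noncomputable section

/-- ℝ² with the Euclidean norm. -/
abbrev E2 : Type := EuclideanSpace ℝ (Fin 2)

/-- The open half-plane `H = {x ∈ ℝ² : x₁ < 0}`. -/
def Hset : Set E2 := {x : E2 | x 0 < 0}

/-- Reflection `x* = (−x₁, x₂)` across `∂H`. -/
def refl2 (x : E2) : E2 := WithLp.toLp 2 (fun i : Fin 2 => if i = 0 then -(x 0) else x i)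

/-- The boundary point `(0, t) ∈ ∂H`. -/
def bd (t : ℝ) : E2 := WithLp.toLp 2 (fun i : Fin 2 => if i = 0 then (0 : ℝ) else t)

/-- The Laplace operator `Δf = ∑ᵢ ∂²f/∂xᵢ²`. -/
def lap (f : E2 → ℝ) (x : E2) : ℝ :=
  ∑ i, iteratedFDeriv ℝ 2 f x ![EuclideanSpace.single i 1, EuclideanSpace.single i 1]

/-- The partial derivative `∂₁ f` with respect to the first coordinate. -/
def pd1 (f : E2 → ℝ) (x : E2) : ℝ := fderiv ℝ f x (EuclideanSpace.single 0 1)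

/-- Boggio's biharmonic Green function of the half-plane `H ⊆ ℝ²`. -/
def boggio2 (x y : E2) : ℝ :=
  (1 / (8 * π)) * dist x y ^ 2 *
    ∫ v in (1:ℝ)..(dist (refl2 x) y / dist x y), (v ^ 2 - 1) / v

/-! With `d = |x - y|` and `a = |x* - y|`, the integral in `G_H` is elementary:
`d² ∫₁^{a/d} (v² - 1)/v dv = (a² - d²)/2 - d² log a + d² log d`. As `y → x`, `d → 0` while
`a → |x* - x| = 2|x₁| > 0`, and `d² log d → 0`, so `8π G_H(x, y) → (2x₁)²/2`. -/

theorem integral_sq_sub_one_div_self {R : ℝ} (hR : 0 < R) :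
    ∫ v in (1:ℝ)..R, (v ^ 2 - 1) / v = (R ^ 2 - 1) / 2 - log R := by
  have h0 : (0 : ℝ) ∉ Set.uIcc 1 R := Set.notMem_uIcc_of_lt one_pos hR
  have hsplit : ∀ v ∈ Set.uIcc (1:ℝ) R, (v ^ 2 - 1) / v = v - 1 / v := by
    intro v hv
    have hv0 : v ≠ 0 := fun h => h0 (h ▸ hv)
    field_simp
  rw [intervalIntegral.integral_congr hsplit,
    intervalIntegral.integral_sub intervalIntegral.intervalIntegrable_id
      (intervalIntegral.intervalIntegrable_one_div (fun v hv h => h0 (h ▸ hv))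
        continuousOn_id),
    integral_id, integral_one_div h0, div_one, one_pow]

theorem sq_mul_integral_sq_sub_one_div_self {a d : ℝ} (ha : 0 < a) (hd : 0 < d) :
    d ^ 2 * ∫ v in (1:ℝ)..a / d, (v ^ 2 - 1) / v =
      (a ^ 2 - d ^ 2) / 2 - d ^ 2 * log a + d * (d * log d) := by
  rw [integral_sq_sub_one_div_self (div_pos ha hd), log_div ha.ne' hd.ne']
  field_simp
  ring

theorem tendsto_sq_mul_integral_sq_sub_one_div_self {α : Type*} {l : Filter α} {a d : α → ℝ}
    {c : ℝ} (hc : 0 < c) (ha : Tendsto a l (𝓝 c)) (hd : Tendsto d l (𝓝 0))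
    (hd_pos : ∀ᶠ t in l, 0 < d t) :
    Tendsto (fun t => d t ^ 2 * ∫ v in (1:ℝ)..a t / d t, (v ^ 2 - 1) / v) l (𝓝 (c ^ 2 / 2)) := by
  have ha_pos : ∀ᶠ t in l, 0 < a t := ha.eventually (eventually_gt_nhds hc)
  -- `d² log d → 0` because `x ↦ x log x` is continuous at `0` (where `log 0 = 0`).
  have hclosed : Tendsto (fun t => (a t ^ 2 - d t ^ 2) / 2 - d t ^ 2 * log (a t)
      + d t * (d t * log (d t))) l (𝓝 ((c ^ 2 - 0 ^ 2) / 2 - 0 ^ 2 * log c + 0 * (0 * log 0))) :=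
    (((ha.pow 2).sub (hd.pow 2)).div_const 2 |>.sub ((hd.pow 2).mul (ha.log hc.ne'))).add
      (hd.mul ((continuous_mul_log.tendsto 0).comp hd))
  simp only [ne_eq, OfNat.ofNat_ne_zero, not_false_eq_true, zero_pow, sub_zero, zero_mul,
    add_zero] at hclosed
  refine hclosed.congr' ?_
  filter_upwards [ha_pos, hd_pos] with t hat hdt
  exact (sq_mul_integral_sq_sub_one_div_self hat hdt).symm

theorem dist_refl2_self (x : E2) : dist (refl2 x) x = 2 * |x 0| := by
  rw [EuclideanSpace.dist_eq, Fin.sum_univ_two]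
  simp only [refl2, Fin.isValue, ↓reduceIte, one_ne_zero, dist_self, Real.dist_eq]
  rw [show -x 0 - x 0 = -(2 * x 0) by ring, abs_neg, abs_mul, abs_two]
  simp only [ne_eq, OfNat.ofNat_ne_zero, not_false_eq_true, zero_pow, add_zero]
  rw [sqrt_sq_eq_abs, abs_mul, abs_two, abs_abs]

/-- Boggio's Green function of the half-plane extends continuously and
positively to the diagonal: `G_H(x,y) → x₁²/(4π) > 0` as `y → x`, `y ∈ H`, `y ≠ x`. -/
theorem boggio2_diagonal_limit (x : E2) (hx : x 0 < 0) :
    Filter.Tendsto (fun y => boggio2 x y) (nhdsWithin x (Hset \ {x}))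
        (nhds ((x 0) ^ 2 / (4 * π)))
      ∧ (x 0) ^ 2 / (4 * π) > 0 := by
  have hx0 : x 0 ≠ 0 := hx.ne
  refine ⟨?_, by positivity⟩
  have hd : Tendsto (dist x) (𝓝[Hset \ {x}] x) (𝓝 0) := by
    rw [← dist_self x]
    exact ((continuous_const.dist continuous_id).tendsto x).mono_left nhdsWithin_le_nhds
  have hd_pos : ∀ᶠ y in 𝓝[Hset \ {x}] x, 0 < dist x y := by
    filter_upwards [self_mem_nhdsWithin] with y hy
    exact dist_pos.mpr fun h => hy.2 h.symm
  have ha : Tendsto (dist (refl2 x)) (𝓝[Hset \ {x}] x) (𝓝 (2 * |x 0|)) := by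
    rw [← dist_refl2_self]
    exact ((continuous_const.dist continuous_id).tendsto x).mono_left nhdsWithin_le_nhds
  have hlim := (tendsto_sq_mul_integral_sq_sub_one_div_self (by positivity) ha hd hd_pos).const_mul
    (1 / (8 * π))
  convert hlim using 2 with y
  · rw [boggio2, mul_assoc]
  · rw [mul_pow, sq_abs]
    field_simp
    ring
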